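/- arXiv:2110.12808 — 2 statements merged into one kernel-verified Lean document; each statement's English description precedes it below -/
import Mathlib

section
/- Let F be an uncountable closed subset of the Sorgenfrey line. Then there exists a subset C ⊆ F that is closed in the Sorgenfrey line and, with the subspace topology, is homeomorphic to the Sorgenfrey line. -/
open Set Filter Topology Function

/-- The Sorgenfrey line: the real line as a type synonym. -/
def SorgenfreyLine : Type := ℝ

notation "𝕊" => SorgenfreyLine

noncomputable instance : LinearOrder 𝕊 := inferInstanceAs (LinearOrder ℝ)
instance : RatCast 𝕊 := inferInstanceAs (RatCast ℝ)

/-- The topology on the Sorgenfrey line, generated by half-open intervals `[a, b)`, `a < b`. -/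
instance : TopologicalSpace 𝕊 :=
  TopologicalSpace.generateFrom {s : Set 𝕊 | ∃ a b : 𝕊, a < b ∧ s = Set.Ico a b}

/-!
Removing from `F` the countably many points `x` for which `F ∩ [x, x + ε)` is countable for some
`ε > 0` leaves a densely ordered set, into which `ℚ` embeds by a strictly monotone `H`. Then
`g t = inf {H q | t < q}` is strictly monotone and right-continuous, i.e. a continuous embedding
`𝕊 → 𝕊`, and it takes values in `F` because the closed sets of `𝕊` are exactly those containing
the infima of their nonempty subsets bounded below. For the same reason `g '' [0, ∞)` is closed,
and `[0, ∞) ≃ₜ 𝕊` by permuting the unit intervals `[n, n + 1)`.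
-/

open TopologicalSpace

theorem countable_of_countable_inter_Ici {α : Type*} [LinearOrder α] [TopologicalSpace α]
    [OrderTopology α] [SecondCountableTopology α] {A : Set α}
    (h : ∀ x ∈ A, (A ∩ Ici x).Countable) : A.Countable := by
  by_cases hmin : ∃ x ∈ A, ∀ y ∈ A, x ≤ y
  · obtain ⟨x, hx, hxA⟩ := hmin
    exact (h x hx).mono fun y hy => mem_inter hy (hxA y hy)
  push Not at hmin
  obtain ⟨T, hTA, hT, hcover⟩ := isOpen_biUnion_countable A Ioi fun x _ => isOpen_Ioi
  refine (hT.biUnion fun x hx => h x (hTA hx)).mono fun y hy => ?_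
  obtain ⟨x, hx, hxy⟩ := hmin y hy
  have hyT : y ∈ ⋃ z ∈ T, Ioi z := hcover ▸ mem_biUnion hx hxy
  obtain ⟨z, hz, hzy⟩ := mem_iUnion₂.1 hyT
  exact mem_biUnion hz ⟨hy, hzy.le⟩

noncomputable instance : ConditionallyCompleteLinearOrder 𝕊 :=
  inferInstanceAs (ConditionallyCompleteLinearOrder ℝ)
noncomputable instance : Field 𝕊 := inferInstanceAs (Field ℝ)
instance : IsStrictOrderedRing 𝕊 := inferInstanceAs (IsStrictOrderedRing ℝ)
instance : Archimedean 𝕊 := inferInstanceAs (Archimedean ℝ)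
noncomputable instance : FloorRing 𝕊 := inferInstanceAs (FloorRing ℝ)

namespace SorgenfreyLine

theorem isTopologicalBasis_Ico :
    IsTopologicalBasis {s : Set 𝕊 | ∃ a b : 𝕊, a < b ∧ s = Ico a b} where
  exists_subset_inter := by
    rintro _ ⟨a, b, -, rfl⟩ _ ⟨c, d, -, rfl⟩ x ⟨hx₁, hx₂⟩
    have hx : x < min b d := lt_min hx₁.2 hx₂.2
    refine ⟨Ico x (min b d), ⟨x, _, hx, rfl⟩, ⟨le_rfl, hx⟩, fun t ht => ⟨⟨hx₁.1.trans ht.1, ?_⟩,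
      ⟨hx₂.1.trans ht.1, ?_⟩⟩⟩
    exacts [ht.2.trans_le (min_le_left _ _), ht.2.trans_le (min_le_right _ _)]
  sUnion_eq := eq_univ_of_forall fun x =>
    ⟨Ico x (x + 1), ⟨x, x + 1, lt_add_one x, rfl⟩, le_rfl, lt_add_one x⟩
  eq_generateFrom := rfl

theorem nhds_basis_Ico (a : 𝕊) : (𝓝 a).HasBasis (a < ·) (Ico a ·) where
  mem_iff' s := by
    rw [isTopologicalBasis_Ico.mem_nhds_iff]
    constructor
    · rintro ⟨_, ⟨c, d, -, rfl⟩, ha, hs⟩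
      exact ⟨d, ha.2, (Ico_subset_Ico_left ha.1).trans hs⟩
    · rintro ⟨b, hb, hs⟩
      exact ⟨_, ⟨a, b, hb, rfl⟩, ⟨le_rfl, hb⟩, hs⟩

theorem continuousAt_iff {f : 𝕊 → 𝕊} {x : 𝕊} :
    ContinuousAt f x ↔ ∀ d > f x, ∃ b > x, ∀ t ∈ Ico x b, f t ∈ Ico (f x) d :=
  (nhds_basis_Ico x).tendsto_iff (nhds_basis_Ico (f x))

theorem isClosed_iff_csInf_mem {s : Set 𝕊} :
    IsClosed s ↔ ∀ S ⊆ s, S.Nonempty → BddBelow S → sInf S ∈ s := by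
  refine ⟨fun hs S hSs hne hbdd => hs.closure_subset_iff.2 hSs ?_, fun h => ?_⟩
  · rw [mem_closure_iff_nhds_basis (nhds_basis_Ico _)]
    intro b hb
    obtain ⟨t, htS, htb⟩ := exists_lt_of_csInf_lt hne hb
    exact ⟨t, htS, csInf_le hbdd htS, htb⟩
  refine isClosed_of_closure_subset fun x hx => ?_
  rw [mem_closure_iff_nhds_basis (nhds_basis_Ico x)] at hx
  have hbdd : BddBelow (s ∩ Ici x) := ⟨x, fun t ht => ht.2⟩
  have hne : (s ∩ Ici x).Nonempty :=
    let ⟨t, hts, htx, _⟩ := hx (x + 1) (lt_add_one x)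
    ⟨t, hts, htx⟩
  have hinf : sInf (s ∩ Ici x) = x := by
    refine le_antisymm (not_lt.1 fun hlt => ?_) (le_csInf hne fun t ht => ht.2)
    obtain ⟨t, hts, htx, htlt⟩ := hx _ hlt
    exact htlt.not_ge (csInf_le hbdd ⟨hts, htx⟩)
  exact hinf ▸ h _ inter_subset_left hne hbdd

theorem map_csInf_of_continuousAt {f : 𝕊 → 𝕊} {T : Set 𝕊} (hf : Monotone f)
    (hc : ContinuousAt f (sInf T)) (hne : T.Nonempty) (hbdd : BddBelow T) :
    f (sInf T) = sInf (f '' T) := by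
  refine le_antisymm (le_csInf (hne.image f) (forall_mem_image.2 fun t ht => hf (csInf_le hbdd ht)))
    (not_lt.1 fun hlt => ?_)
  obtain ⟨b, hb, hfb⟩ := continuousAt_iff.1 hc _ hlt
  obtain ⟨t, ht, htb⟩ := exists_lt_of_csInf_lt hne hb
  exact (hfb t ⟨csInf_le hbdd ht, htb⟩).2.not_ge (csInf_le (hf.map_bddBelow hbdd) ⟨t, ht, rfl⟩)

theorem isClosed_range_Ici {f : 𝕊 → 𝕊} (hf : Monotone f) (hc : Continuous f) (a : 𝕊) :
    IsClosed (range fun t : Ici a => f t) := by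
  refine isClosed_iff_csInf_mem.2 fun S hS hne _ => ?_
  set T := {t | a ≤ t ∧ f t ∈ S}
  have hST : f '' T = S := by
    refine (image_subset_iff.2 fun t ht => ht.2).antisymm fun s hs => ?_
    obtain ⟨⟨t, ht⟩, rfl⟩ := hS hs
    exact ⟨t, ⟨ht, hs⟩, rfl⟩
  have hTne : T.Nonempty := image_nonempty.1 (hST ▸ hne)
  refine ⟨⟨sInf T, le_csInf hTne fun t ht => ht.1⟩, ?_⟩
  exact (map_csInf_of_continuousAt hf hc.continuousAt hTne ⟨a, fun t ht => ht.1⟩).trans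
    (congrArg sInf hST)

theorem isEmbedding_of_strictMono {f : 𝕊 → 𝕊} (hf : StrictMono f) (hc : Continuous f) :
    IsEmbedding f where
  toIsInducing := isInducing_iff_nhds.2 fun x => le_antisymm (hc.tendsto x).le_comap <|
    (nhds_basis_Ico x).ge_iff.2 fun b hb => mem_comap.2 ⟨Ico (f x) (f b),
      (nhds_basis_Ico (f x)).mem_of_mem (hf hb),
      fun _ ht => ⟨hf.le_iff_le.1 ht.1, hf.lt_iff_lt.1 ht.2⟩⟩
  injective := hf.injective

theorem continuous_add_const (c : 𝕊) : Continuous (· + c) :=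
  continuous_iff_continuousAt.2 fun _ => continuousAt_iff.2 fun d hd =>
    ⟨d - c, lt_sub_iff_add_lt.2 hd, fun _ ht => ⟨add_le_add_left ht.1 c, lt_sub_iff_add_lt.1 ht.2⟩⟩

theorem continuous_fract_add (c : ℤ → 𝕊) : Continuous fun t : 𝕊 => Int.fract t + c ⌊t⌋ := by
  refine continuous_iff_continuousAt.2 fun x => ?_
  have hx : Ico x (⌊x⌋ + 1 : ℤ) ∈ 𝓝 x :=
    (nhds_basis_Ico x).mem_of_mem (by exact_mod_cast Int.lt_floor_add_one x)
  refine (continuous_add_const (c ⌊x⌋ - ⌊x⌋)).continuousAt.congr (eventuallyEq_of_mem hx ?_)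
  intro t ht
  have hfloor : ⌊t⌋ = ⌊x⌋ :=
    Int.floor_eq_iff.2 ⟨(Int.floor_le x).trans ht.1, by exact_mod_cast ht.2⟩
  simp only [Int.fract, hfloor]
  ring

/-- The interval `[n, n + 1)` is sent to `[e n, e n + 1)` for a bijection `e : ℤ ≃ ℕ`. -/
noncomputable def homeomorphIci : 𝕊 ≃ₜ Ici (0 : 𝕊) where
  toFun x := ⟨Int.fract x + (Equiv.intEquivNat ⌊x⌋ : ℕ),
    add_nonneg (Int.fract_nonneg x) (Nat.cast_nonneg _)⟩
  invFun y := Int.fract (y : 𝕊) + (Equiv.intEquivNat.symm ⌊(y : 𝕊)⌋.toNat : ℤ)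
  left_inv x := by
    simp [Int.floor_add_natCast, Int.fract_add_natCast, Int.fract_add_floor]
  right_inv y := by
    ext
    simp only [Int.floor_add_intCast, Int.fract_add_intCast, Int.floor_fract, Int.fract_fract,
      zero_add, Equiv.apply_symm_apply]
    rw [← Int.cast_natCast, Int.toNat_of_nonneg (Int.floor_nonneg.2 y.2), Int.fract_add_floor]
  continuous_toFun := (continuous_fract_add fun n => ((Equiv.intEquivNat n : ℕ) : 𝕊)).subtype_mk _
  continuous_invFun :=
    (continuous_fract_add fun n => (Equiv.intEquivNat.symm n.toNat : 𝕊)).comp continuous_subtype_val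

section RightExtension

variable {H : ℚ → 𝕊}

noncomputable def rightExtension (H : ℚ → 𝕊) (t : 𝕊) : 𝕊 :=
  sInf (H '' {q : ℚ | t < q})

theorem nonempty_image_rat_gt (t : 𝕊) : (H '' {q : ℚ | t < q}).Nonempty :=
  let ⟨q, hq⟩ := exists_rat_gt t
  ⟨H q, q, hq, rfl⟩

theorem bddBelow_image_rat_gt (hH : Monotone H) (t : 𝕊) : BddBelow (H '' {q : ℚ | t < q}) := by
  obtain ⟨p, hp⟩ := exists_rat_lt t
  refine ⟨H p, forall_mem_image.2 fun q hq => hH ?_⟩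
  exact_mod_cast (hp.trans hq).le

theorem rightExtension_le (hH : Monotone H) {t : 𝕊} {q : ℚ} (h : t < q) :
    rightExtension H t ≤ H q :=
  csInf_le (bddBelow_image_rat_gt hH t) ⟨q, h, rfl⟩

theorem le_rightExtension (hH : Monotone H) {t : 𝕊} {q : ℚ} (h : (q : 𝕊) ≤ t) :
    H q ≤ rightExtension H t :=
  le_csInf (nonempty_image_rat_gt t) <| forall_mem_image.2 fun p hp => hH <| by
    exact_mod_cast (h.trans_lt hp).le

theorem monotone_rightExtension (hH : Monotone H) : Monotone (rightExtension H) := fun s t hst =>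
  csInf_le_csInf (bddBelow_image_rat_gt hH s) (nonempty_image_rat_gt t)
    (image_mono fun _ hq => hst.trans_lt hq)

theorem strictMono_rightExtension (hH : StrictMono H) : StrictMono (rightExtension H) := by
  intro s t hst
  obtain ⟨p, hsp, hpt⟩ := exists_rat_btwn hst
  obtain ⟨q, hpq, hqt⟩ := exists_rat_btwn hpt
  calc rightExtension H s ≤ H p := rightExtension_le hH.monotone hsp
    _ < H q := hH (by exact_mod_cast hpq)
    _ ≤ rightExtension H t := le_rightExtension hH.monotone hqt.le

theorem continuous_rightExtension (hH : Monotone H) : Continuous (rightExtension H) := by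
  refine continuous_iff_continuousAt.2 fun x => continuousAt_iff.2 fun d hd => ?_
  obtain ⟨_, ⟨q, hxq, rfl⟩, hqd⟩ := exists_lt_of_csInf_lt (nonempty_image_rat_gt x) hd
  exact ⟨q, hxq, fun t ht =>
    ⟨monotone_rightExtension hH ht.1, (rightExtension_le hH ht.2).trans_lt hqd⟩⟩

theorem rightExtension_mem {F : Set 𝕊} (hF : IsClosed F) (hH : Monotone H)
    (hHF : ∀ q, H q ∈ F) (t : 𝕊) : rightExtension H t ∈ F :=
  isClosed_iff_csInf_mem.1 hF _ (image_subset_iff.2 fun q _ => hHF q)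
    (nonempty_image_rat_gt t) (bddBelow_image_rat_gt hH t)

end RightExtension

theorem countable_setOf_countable_inter_Ico (F : Set 𝕊) :
    {x ∈ F | ∃ b > x, (F ∩ Ico x b).Countable}.Countable := by
  -- `𝕊` carries the order of `ℝ`, whose order topology is second countable.
  have hfiber (q : ℚ) : {x ∈ F | x < q ∧ (F ∩ Ico x q).Countable}.Countable :=
    countable_of_countable_inter_Ici (α := ℝ) fun x hx =>
      hx.2.2.mono fun y hy => show y ∈ F ∩ Ico x q from ⟨hy.1.1, hy.2, hy.1.2.1⟩
  refine (countable_iUnion hfiber).mono ?_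
  rintro x ⟨hxF, b, hxb, hb⟩
  obtain ⟨q, hxq, hqb⟩ := exists_rat_btwn hxb
  exact mem_iUnion.2 ⟨q, hxF, hxq,
    hb.mono (inter_subset_inter_right _ (Ico_subset_Ico_right hqb.le))⟩

theorem exists_strictMono_rat_of_not_countable {F : Set 𝕊} (hF : ¬F.Countable) :
    ∃ H : ℚ → 𝕊, StrictMono H ∧ ∀ q, H q ∈ F := by
  set D := {x ∈ F | ∀ b > x, ¬(F ∩ Ico x b).Countable}
  have hsmall : (F \ D).Countable := (countable_setOf_countable_inter_Ico F).mono fun x hx => by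
    simpa [D, hx.1] using hx.2
  have hdense (a : 𝕊) (ha : a ∈ D) (b : 𝕊) (hab : a < b) : ∃ c ∈ D, a < c ∧ c < b := by
    obtain ⟨c, ⟨hcF, hac, hcb⟩, hc⟩ : ((F ∩ Ico a b) \ ((F \ D) ∪ {a})).Nonempty :=
      sdiff_nonempty.2 fun h => ha.2 b hab ((hsmall.union (countable_singleton a)).mono h)
    have hcD : c ∈ D := by_contra fun h => hc (Or.inl ⟨hcF, h⟩)
    exact ⟨c, hcD, lt_of_le_of_ne hac fun h => hc (Or.inr h.symm), hcb⟩
  have hD : D.Nontrivial := by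
    by_contra h
    exact hF ((hsmall.union (not_nontrivial_iff.1 h).countable).mono (by simp))
  have : Nontrivial D := hD.coe_sort
  have : DenselyOrdered D := ⟨fun a b hab =>
    let ⟨c, hc, hac, hcb⟩ := hdense a a.2 b hab
    ⟨⟨c, hc⟩, hac, hcb⟩⟩
  obtain ⟨e⟩ := Order.embedding_from_countable_to_dense ℚ D
  exact ⟨fun q => e q, fun _ _ h => e.strictMono h, fun q => (e q).2.1⟩

end SorgenfreyLine

/-- Every uncountable closed subset of the Sorgenfrey line contains a subset that is closed in
the Sorgenfrey line and homeomorphic to the Sorgenfrey line. -/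
theorem stmt2 (F : Set 𝕊) (hF : ¬ F.Countable) (hFclosed : IsClosed F) :
    ∃ C ⊆ F, IsClosed C ∧ Nonempty (C ≃ₜ 𝕊) := by
  obtain ⟨H, hH, hHF⟩ := SorgenfreyLine.exists_strictMono_rat_of_not_countable hF
  set g := SorgenfreyLine.rightExtension H
  have hg : Continuous g := SorgenfreyLine.continuous_rightExtension hH.monotone
  have hemb : IsEmbedding fun t : Ici (0 : 𝕊) => g t :=
    (SorgenfreyLine.isEmbedding_of_strictMono (SorgenfreyLine.strictMono_rightExtension hH)
      hg).comp IsEmbedding.subtypeVal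
  refine ⟨range fun t : Ici (0 : 𝕊) => g t, ?_,
    SorgenfreyLine.isClosed_range_Ici (SorgenfreyLine.monotone_rightExtension hH.monotone) hg 0,
    ⟨hemb.toHomeomorph.symm.trans SorgenfreyLine.homeomorphIci.symm⟩⟩
  rintro _ ⟨t, rfl⟩
  exact SorgenfreyLine.rightExtension_mem hFclosed hH.monotone hHF t
end

section
/- Every uncountable closed subset F of the Sorgenfrey line contains an uncountable subset C that is closed in the Sorgenfrey line and has no isolated points (in its subspace topology). -/
open Set Filter Topology Function

/-! Let `C` be the set of points `x ∈ F` such that `F ∩ [x, b)` is uncountable for every `b > x`.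
For each rational `q`, the points `x < q` of `F` with `F ∩ [x, q)` countable form a set all of whose
right tails are countable, and such a subset of `ℝ` is countable: it is covered by the right tails
of a countable dense subset of it, up to at most one point. Hence `F \ C` is countable and `C` is
uncountable. Since `[x, b)` is open in `𝕊`, the complement of `C` is open. Finally no `x ∈ C` is
isolated, because `C ∩ [x, b)` contains `(F ∩ [x, b)) \ (F \ C)`, which is uncountable. -/

section LinearOrder

variable {α : Type*} [LinearOrder α]

def rightCondensationPoints (F : Set α) : Set α :=
  {x ∈ F | ∀ b, x < b → ¬(F ∩ Ico x b).Countable}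

lemma rightCondensationPoints_subset (F : Set α) : rightCondensationPoints F ⊆ F :=
  fun _ hx => hx.1

lemma exists_countable_inter_Ico_of_mem_diff_rightCondensationPoints {F : Set α} {x : α}
    (hx : x ∈ F \ rightCondensationPoints F) : ∃ b, x < b ∧ (F ∩ Ico x b).Countable := by
  simpa [rightCondensationPoints, hx.1] using hx.2

variable [TopologicalSpace α] [OrderTopology α] [SecondCountableTopology α]

lemma Set.Countable.of_forall_countable_inter_Ici {A : Set α}
    (h : ∀ x ∈ A, (A ∩ Ici x).Countable) : A.Countable := by
  obtain ⟨t, htA, htc, hAt⟩ :=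
    (TopologicalSpace.IsSeparable.of_separableSpace A).exists_countable_dense_subset
  have hbelow : ∀ y ∈ A, ∀ z ∈ lowerBounds t, ¬y < z := fun y hyA z hzt hyz => by
    obtain ⟨s, hsz, hs⟩ := mem_closure_iff.1 (hAt hyA) (Iio z) isOpen_Iio hyz
    exact (hzt hs).not_gt hsz
  have hlow : (A ∩ lowerBounds t).Subsingleton := fun y ⟨hyA, hyt⟩ z ⟨hzA, hzt⟩ =>
    le_antisymm (not_lt.1 (hbelow z hzA y hyt)) (not_lt.1 (hbelow y hyA z hzt))
  refine ((htc.biUnion fun s hs => h s (htA hs)).union hlow.countable).mono fun y hy => ?_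
  by_cases hex : ∃ s ∈ t, s ≤ y
  · obtain ⟨s, hs, hsy⟩ := hex
    exact Or.inl (mem_biUnion hs ⟨hy, hsy⟩)
  · push Not at hex
    exact Or.inr ⟨hy, fun s hs => (hex s hs).le⟩

lemma countable_diff_rightCondensationPoints [DenselyOrdered α] (F : Set α) :
    (F \ rightCondensationPoints F).Countable := by
  obtain ⟨D, hDc, hD⟩ := TopologicalSpace.exists_countable_dense α
  let A : α → Set α := fun q => {x ∈ F | x < q ∧ (F ∩ Ico x q).Countable}
  have hA : ∀ q, (A q).Countable := fun q =>
    Set.Countable.of_forall_countable_inter_Ici fun x hx =>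
      hx.2.2.mono fun y ⟨hyA, hxy⟩ => ⟨hyA.1, hxy, hyA.2.1⟩
  refine (hDc.biUnion fun q _ => hA q).mono fun x hx => ?_
  obtain ⟨b, hxb, hcount⟩ := exists_countable_inter_Ico_of_mem_diff_rightCondensationPoints hx
  obtain ⟨q, hqD, hxq, hqb⟩ := hD.exists_between hxb
  exact mem_biUnion hqD
    ⟨hx.1, hxq, hcount.mono (inter_subset_inter_right _ (Ico_subset_Ico_right hqb.le))⟩

end LinearOrder

namespace SorgenfreyLine

lemma isOpen_Ico {a b : 𝕊} (hab : a < b) : IsOpen (Ico a b) :=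
  TopologicalSpace.isOpen_generateFrom_of_mem ⟨a, b, hab, rfl⟩

lemma exists_Ico_subset_of_isOpen {U : Set 𝕊} (hU : IsOpen U) :
    ∀ x ∈ U, ∃ b, x < b ∧ Ico x b ⊆ U := by
  induction hU with
  | basic s hs =>
    obtain ⟨a, b, hab, rfl⟩ := hs
    exact fun x hx => ⟨b, hx.2, Ico_subset_Ico_left hx.1⟩
  | univ =>
    intro x _
    obtain ⟨b, hb⟩ := exists_gt (α := ℝ) x
    exact ⟨b, hb, subset_univ _⟩
  | inter s t _ _ ihs iht =>
    intro x hx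
    obtain ⟨b₁, hb₁, hsb₁⟩ := ihs x hx.1
    obtain ⟨b₂, hb₂, hsb₂⟩ := iht x hx.2
    exact ⟨min b₁ b₂, lt_min hb₁ hb₂,
      subset_inter (Ico_subset_Ico_right (min_le_left _ _) |>.trans hsb₁)
        (Ico_subset_Ico_right (min_le_right _ _) |>.trans hsb₂)⟩
  | sUnion S _ ih =>
    rintro x ⟨s, hsS, hxs⟩
    obtain ⟨b, hb, hsub⟩ := ih s hsS x hxs
    exact ⟨b, hb, hsub.trans (subset_sUnion_of_mem hsS)⟩

lemma nhds_basis_Ico_s3 (x : 𝕊) : (𝓝 x).HasBasis (x < ·) (Ico x) := by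
  refine ⟨fun U => ⟨fun hU => ?_, fun ⟨b, hxb, hsub⟩ => ?_⟩⟩
  · obtain ⟨V, hVU, hV, hxV⟩ := mem_nhds_iff.1 hU
    obtain ⟨b, hxb, hsub⟩ := exists_Ico_subset_of_isOpen hV x hxV
    exact ⟨b, hxb, hsub.trans hVU⟩
  · exact mem_of_superset ((isOpen_Ico hxb).mem_nhds (left_mem_Ico.2 hxb)) hsub

-- `𝕊` carries the order of `ℝ`, so this is the statement for `ℝ` read in `𝕊`.
lemma countable_diff_rightCondensationPoints (F : Set 𝕊) :
    (F \ rightCondensationPoints F).Countable :=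
  _root_.countable_diff_rightCondensationPoints (α := ℝ) F

lemma not_countable_rightCondensationPoints {F : Set 𝕊} (hF : ¬F.Countable) :
    ¬(rightCondensationPoints F).Countable := fun hK =>
  hF (((countable_diff_rightCondensationPoints F).union hK).mono
    (sdiff_union_self.symm ▸ subset_union_left))

lemma isClosed_rightCondensationPoints {F : Set 𝕊} (hF : IsClosed F) :
    IsClosed (rightCondensationPoints F) := by
  rw [← isOpen_compl_iff, isOpen_iff_forall_mem_open]
  intro x hxK
  by_cases hxF : x ∈ F
  · obtain ⟨b, hxb, hcount⟩ :=
      exists_countable_inter_Ico_of_mem_diff_rightCondensationPoints ⟨hxF, hxK⟩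
    refine ⟨Ico x b, fun y hy hyK => hyK.2 b hy.2 (hcount.mono ?_), isOpen_Ico hxb,
      left_mem_Ico.2 hxb⟩
    exact inter_subset_inter_right _ (Ico_subset_Ico_left hy.1)
  · exact ⟨Fᶜ, fun y hyF hyK => hyF hyK.1, hF.isOpen_compl, hxF⟩

lemma not_isOpen_singleton_rightCondensationPoints {F : Set 𝕊}
    (x : rightCondensationPoints F) : ¬IsOpen ({x} : Set (rightCondensationPoints F)) := by
  intro hopen
  obtain ⟨U, hU, hUx⟩ := (mem_nhds_subtype _ x _).1 (hopen.mem_nhds rfl)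
  obtain ⟨b, hxb, hIco⟩ := (nhds_basis_Ico_s3 x).mem_iff.1 hU
  have hsub : F ∩ Ico x b ⊆ (F \ rightCondensationPoints F) ∪ {(x : 𝕊)} := by
    rintro y ⟨hyF, hy⟩
    by_cases hyK : y ∈ rightCondensationPoints F
    · exact Or.inr (congrArg Subtype.val (hUx (hIco hy) : (⟨y, hyK⟩ : _) = x))
    · exact Or.inl ⟨hyF, hyK⟩
  exact x.2.2 b hxb (((countable_diff_rightCondensationPoints F).union
    (countable_singleton _)).mono hsub)

end SorgenfreyLine

open SorgenfreyLine in
/-- Every uncountable closed subset of the Sorgenfrey line contains an uncountable subset that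
is closed in the Sorgenfrey line and has no isolated points in its subspace topology. -/
theorem stmt3 (F : Set 𝕊) (hF : ¬ F.Countable) (hFclosed : IsClosed F) :
    ∃ C ⊆ F, ¬ C.Countable ∧ IsClosed C ∧ ∀ x : C, ¬ IsOpen ({x} : Set C) :=
  ⟨rightCondensationPoints F, rightCondensationPoints_subset F,
    not_countable_rightCondensationPoints hF, isClosed_rightCondensationPoints hFclosed,
    not_isOpen_singleton_rightCondensationPoints⟩
end
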